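/- arXiv:0704.2730 — 2 statements merged into one kernel-verified Lean document; each statement's English description precedes it below -/
import Mathlib

section
/- Let ξ ∈ ℝ² with |ξ| ∼ N₂, let r ∼ N₂, let θ ∈ (0, 1/50), let ε > 0 be sufficiently small, and fix integers l₁, l₂. Then the arc-neighborhood set {ξ₁ ∈ ℝ² : arg(ξ₁) = l₁θ + O(θ), arg(ξ−ξ₁) = l₂θ + O(θ), ||ξ₁ − ξ/2| − r| ≤ ε/N₂} has two-dimensional Lebesgue measure at most C θ ε for an absolute constant C. -/
open MeasureTheory Complex

lemma aux_expdist (x y : ℝ) :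
    ‖Complex.exp (↑x * I) - Complex.exp (↑y * I)‖ ≤ |x - y| := by
  have h2 : Complex.normSq (Complex.exp (↑x * I) - Complex.exp (↑y * I)) ≤ (x - y)^2 := by
    rw [Complex.normSq_apply]
    simp only [Complex.sub_re, Complex.sub_im, Complex.exp_ofReal_mul_I_re,
      Complex.exp_ofReal_mul_I_im]
    have hc : Real.cos (x - y) = 1 - 2 * Real.sin ((x-y)/2)^2 := by
      have h := Real.cos_two_mul ((x-y)/2)
      have h2 := Real.sin_sq_add_cos_sq ((x-y)/2)
      rw [show 2*((x-y)/2) = x - y from by ring] at h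
      linarith
    have h3 : |Real.sin ((x-y)/2)| ≤ |(x-y)/2| := Real.abs_sin_le_abs
    have h4 := mul_self_le_mul_self (abs_nonneg (Real.sin ((x-y)/2))) h3
    have hs : Real.sin ((x-y)/2)^2 ≤ ((x-y)/2)^2 := by
      nlinarith [_root_.sq_abs (Real.sin ((x-y)/2)), _root_.sq_abs ((x-y)/2)]
    have hcs := Real.cos_sub x y
    nlinarith [Real.sin_sq_add_cos_sq x, Real.sin_sq_add_cos_sq y]
  calc ‖Complex.exp (↑x * I) - Complex.exp (↑y * I)‖
      = Real.sqrt (Complex.normSq (Complex.exp (↑x * I) - Complex.exp (↑y * I))) :=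
        Complex.norm_def _
    _ ≤ Real.sqrt ((x-y)^2) := Real.sqrt_le_sqrt h2
    _ = |x - y| := Real.sqrt_sq_eq_abs _

lemma aux_claimA (θ N₂ r d L : ℝ) (c z : ℂ)
    (hθ : 0 < θ) (hθ' : θ < 1/50) (hN : 0 < N₂) (hr1 : N₂/2 ≤ r) (hr2 : r ≤ 2*N₂)
    (hc : ‖c‖ ≤ N₂) (hd0 : 0 < d) (hd : d ≤ N₂/100)
    (h1 : |Complex.arg z - L| ≤ θ) (h2 : |‖z - c‖ - r| ≤ d)
    (h3 : 9/10*r^2 ≤ (z * (starRingEnd ℂ) (z - c)).re) :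
    3/100*N₂ ≤ ((starRingEnd ℂ) (Complex.exp (↑L * I)) * (z - c)).re := by
  set u : ℂ := Complex.exp (↑L * I) with hu
  have hu1 : ‖u‖ = 1 := Complex.norm_exp_ofReal_mul_I L
  have hz0 : z ≠ 0 := by
    rintro rfl
    rw [zero_mul, Complex.zero_re] at h3
    nlinarith
  set ρ := ‖z‖ with hρdef
  have hρ0 : 0 < ρ := norm_pos_iff.mpr hz0
  set v : ℂ := Complex.exp (↑(Complex.arg z) * I) with hv
  have hzv : (↑ρ : ℂ) * v = z := Complex.norm_mul_exp_arg_mul_I z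
  have hvu : ‖v - u‖ ≤ θ := (aux_expdist (Complex.arg z) L).trans h1
  have h2' := abs_le.1 h2
  have hzc_ub : ‖z - c‖ ≤ r + d := by
    linarith [h2'.2]
  have hρle : ρ ≤ 301/100*N₂ := by
    have ht : ‖z‖ ≤ ‖z - c‖ + ‖c‖ := by
      calc ‖z‖ = ‖z - c + c‖ := by rw [show z - c + c = z from by ring]
        _ ≤ ‖z - c‖ + ‖c‖ := norm_add_le _ _
    rw [← hρdef] at ht
    linarith [h2'.2]
  have hconj : (starRingEnd ℂ) z = (↑ρ : ℂ) * (starRingEnd ℂ) v := by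
    rw [← hzv, map_mul, Complex.conj_ofReal]
  have keyC : (↑ρ : ℂ) * ((starRingEnd ℂ) u * (z - c))
      = (starRingEnd ℂ) z * (z - c)
        + (↑ρ : ℂ) * (((starRingEnd ℂ) u - (starRingEnd ℂ) v) * (z - c)) := by
    rw [hconj]; ring
  have key : ρ * (((starRingEnd ℂ) u * (z - c)).re)
      = ((starRingEnd ℂ) z * (z - c)).re
        + ((↑ρ : ℂ) * (((starRingEnd ℂ) u - (starRingEnd ℂ) v) * (z - c))).re := by
    rw [← Complex.add_re, ← keyC, Complex.re_ofReal_mul]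
  have hre1 : 9/10*r^2 ≤ ((starRingEnd ℂ) z * (z - c)).re := by
    have e : ((starRingEnd ℂ) z * (z - c)).re = (z * (starRingEnd ℂ) (z - c)).re := by
      simp only [Complex.mul_re, Complex.conj_re, Complex.conj_im]
      ring
    rw [e]; exact h3
  have habs : ‖(↑ρ : ℂ) * (((starRingEnd ℂ) u - (starRingEnd ℂ) v) * (z - c))‖
      ≤ ρ * (θ * (r + d)) := by
    rw [norm_mul, norm_mul, Complex.norm_real, Real.norm_eq_abs, abs_of_pos hρ0]
    have h1' : ‖(starRingEnd ℂ) u - (starRingEnd ℂ) v‖ ≤ θ := by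
      rw [← map_sub, Complex.norm_conj]
      rw [show u - v = -(v - u) from by ring, norm_neg]
      exact hvu
    have := mul_le_mul h1' hzc_ub (norm_nonneg _) hθ.le
    exact mul_le_mul_of_nonneg_left this hρ0.le
  have hre2 : -(ρ * (θ * (r + d)))
      ≤ ((↑ρ : ℂ) * (((starRingEnd ℂ) u - (starRingEnd ℂ) v) * (z - c))).re :=
    neg_le_of_abs_le ((Complex.abs_re_le_norm _).trans habs)
  have hb1 : ρ * (θ * (r + d)) ≤ (301/100*N₂) * ((1/50) * (201/100*N₂)) := by
    have e1 : θ * (r + d) ≤ (1/50) * (201/100*N₂) :=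
      mul_le_mul hθ'.le (by linarith) (by linarith) (by norm_num)
    exact mul_le_mul hρle e1 (mul_nonneg hθ.le (by linarith)) (by linarith)
  have hb2 : ρ * (3/100*N₂) ≤ (301/100*N₂) * (3/100*N₂) :=
    mul_le_mul_of_nonneg_right hρle (by positivity)
  have hb3 : 9/40*N₂^2 ≤ 9/10*r^2 := by nlinarith
  have final : ρ * (3/100*N₂) ≤ ρ * (((starRingEnd ℂ) u * (z - c)).re) := by
    rw [key]
    nlinarith [hre1, hre2, hb1, hb2, hb3]
  exact le_of_mul_le_mul_left final hρ0

lemma aux_claimB (θ N₂ r d L : ℝ) (c z : ℂ)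
    (hθ : 0 < θ) (hθ' : θ < 1/50) (hN : 0 < N₂) (hr1 : N₂/2 ≤ r) (hr2 : r ≤ 2*N₂)
    (hc : ‖c‖ ≤ N₂) (hd0 : 0 < d) (hd : d ≤ N₂/100)
    (h1 : |Complex.arg z - L| ≤ θ) (h2 : |‖z - c‖ - r| ≤ d) :
    |((starRingEnd ℂ) (I * Complex.exp (↑L * I)) * z).re| ≤ 4*N₂*θ := by
  by_cases hz0 : z = 0
  · subst hz0
    simp only [mul_zero, Complex.zero_re, abs_zero]
    positivity
  set u : ℂ := Complex.exp (↑L * I) with hu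
  have hu1 : ‖u‖ = 1 := Complex.norm_exp_ofReal_mul_I L
  set ρ := ‖z‖ with hρdef
  have hρ0 : 0 < ρ := norm_pos_iff.mpr hz0
  set v : ℂ := Complex.exp (↑(Complex.arg z) * I) with hv
  have hzv : (↑ρ : ℂ) * v = z := Complex.norm_mul_exp_arg_mul_I z
  have hvu : ‖v - u‖ ≤ θ := (aux_expdist (Complex.arg z) L).trans h1
  have h2' := abs_le.1 h2
  have hρle : ρ ≤ 301/100*N₂ := by
    have ht : ‖z‖ ≤ ‖z - c‖ + ‖c‖ := by
      calc ‖z‖ = ‖z - c + c‖ := by rw [show z - c + c = z from by ring]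
        _ ≤ ‖z - c‖ + ‖c‖ := norm_add_le _ _
    rw [← hρdef] at ht
    linarith [h2'.2]
  have huu : (starRingEnd ℂ) u * u = 1 := by
    rw [mul_comm, Complex.mul_conj]
    norm_cast
    rw [Complex.normSq_eq_norm_sq, hu1, one_pow]
  have conjIu : (starRingEnd ℂ) (I*u) = -I * (starRingEnd ℂ) u := by
    rw [map_mul, Complex.conj_I]
  have e : (starRingEnd ℂ) (I*u) * z
      = (↑ρ : ℂ) * ((-I * (starRingEnd ℂ) u) * (v - u)) + (↑ρ : ℂ) * (-I) := by
    calc (starRingEnd ℂ) (I*u) * z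
        = (↑ρ : ℂ) * ((-I * (starRingEnd ℂ) u) * (v - u))
          + (↑ρ : ℂ) * (-I * ((starRingEnd ℂ) u * u)) := by rw [← hzv, conjIu]; ring
      _ = _ := by rw [huu, mul_one]
  rw [e]
  have hre0 : ((↑ρ : ℂ) * (-I)).re = 0 := by simp
  rw [Complex.add_re, hre0, add_zero]
  have habs : |((↑ρ:ℂ) * ((-I * (starRingEnd ℂ) u) * (v - u))).re| ≤ ρ * θ := by
    refine (Complex.abs_re_le_norm _).trans ?_
    rw [norm_mul, Complex.norm_real, Real.norm_eq_abs, abs_of_pos hρ0]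
    have h5 : ‖(-I * (starRingEnd ℂ) u) * (v - u)‖ ≤ θ := by
      rw [norm_mul, norm_mul, norm_neg, Complex.norm_I, Complex.norm_conj, hu1]
      simpa using hvu
    exact mul_le_mul_of_nonneg_left h5 hρ0.le
  refine habs.trans ?_
  nlinarith [hθ.le]

set_option maxHeartbeats 1000000 in
lemma aux_claimC (θ N₂ r d L : ℝ) (c z z' : ℂ)
    (hθ : 0 < θ) (hθ' : θ < 1/50) (hN : 0 < N₂) (hr1 : N₂/2 ≤ r) (hr2 : r ≤ 2*N₂)
    (hc : ‖c‖ ≤ N₂) (hd0 : 0 < d) (hd : d ≤ N₂/100)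
    (hz1 : |Complex.arg z - L| ≤ θ) (hz2 : |‖z - c‖ - r| ≤ d)
    (hz3 : 9/10*r^2 ≤ (z * (starRingEnd ℂ) (z - c)).re)
    (hz1' : |Complex.arg z' - L| ≤ θ) (hz2' : |‖z' - c‖ - r| ≤ d)
    (hz3' : 9/10*r^2 ≤ (z' * (starRingEnd ℂ) (z' - c)).re)
    (t : ℝ) (ht : z' - z = ↑t * Complex.exp (↑L * I)) :
    |t| ≤ 134*d := by
  set u : ℂ := Complex.exp (↑L * I) with hu
  have hu1 : ‖u‖ = 1 := Complex.norm_exp_ofReal_mul_I L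
  have huu : (starRingEnd ℂ) u * u = 1 := by
    rw [mul_comm, Complex.mul_conj]
    norm_cast
    rw [Complex.normSq_eq_norm_sq, hu1, one_pow]
  have hA := aux_claimA θ N₂ r d L c z hθ hθ' hN hr1 hr2 hc hd0 hd hz1 hz2 hz3
  have hA' := aux_claimA θ N₂ r d L c z' hθ hθ' hN hr1 hr2 hc hd0 hd hz1' hz2' hz3'
  set A := ((starRingEnd ℂ) u * (z - c)).re with hAdef
  have hz'c : z' - c = (z - c) + ↑t * u := by
    have e : z' - c = (z - c) + (z' - z) := by ring
    rw [e, ht]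
  have hA'eq : ((starRingEnd ℂ) u * (z' - c)).re = A + t := by
    rw [hz'c, mul_add, Complex.add_re, hAdef]
    congr 1
    rw [show (starRingEnd ℂ) u * ((↑t:ℂ) * u) = ↑t * ((starRingEnd ℂ) u * u) from by ring,
      huu, mul_one, Complex.ofReal_re]
  have hgg : ‖z' - c‖^2 - ‖z - c‖^2 = t * (A + (A + t)) := by
    have hq1 : ‖z' - c‖^2 = Complex.normSq (z' - c) := by
      rw [← Complex.sq_norm]
    have hq2 : ‖z - c‖^2 = Complex.normSq (z - c) := by
      rw [← Complex.sq_norm]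
    rw [hq1, hq2, hz'c, Complex.normSq_add]
    have e1 : Complex.normSq (↑t * u) = t^2 := by
      rw [map_mul, Complex.normSq_ofReal, Complex.normSq_eq_norm_sq, hu1]; ring
    have e2 : ((z - c) * (starRingEnd ℂ) (↑t * u)).re = t * A := by
      rw [map_mul, Complex.conj_ofReal,
        show (z - c) * ((↑t:ℂ) * (starRingEnd ℂ) u) = ↑t * ((starRingEnd ℂ) u * (z - c)) from
          by ring,
        Complex.re_ofReal_mul, hAdef]
    rw [e1, e2]; ring
  have hgub := abs_le.1 hz2
  have hg'ub := abs_le.1 hz2'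
  have hrd : 0 ≤ r - d := by linarith
  have hub1 : ‖z' - c‖^2 ≤ (r+d)^2 := by nlinarith [hg'ub.2, norm_nonneg (z' - c)]
  have hub2 : ‖z - c‖^2 ≤ (r+d)^2 := by nlinarith [hgub.2, norm_nonneg (z - c)]
  have hlb1 : (r-d)^2 ≤ ‖z - c‖^2 := by nlinarith [hgub.1, hrd]
  have hlb2 : (r-d)^2 ≤ ‖z' - c‖^2 := by nlinarith [hg'ub.1, hrd]
  have habs : |‖z' - c‖^2 - ‖z - c‖^2| ≤ 4*(r*d) := by
    rw [abs_le]
    constructor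
    · nlinarith [hub2, hlb2]
    · nlinarith [hub1, hlb1]
  have hAt : 3/100*N₂ ≤ A + t := by rw [← hA'eq]; exact hA'
  have hpos : 0 < A + (A + t) := by linarith
  have hkey : |t| * (A + (A + t)) ≤ 4*(r*d) := by
    calc |t| * (A + (A+t)) = |t * (A + (A+t))| := by rw [abs_mul, abs_of_pos hpos]
      _ = |‖z' - c‖^2 - ‖z - c‖^2| := by rw [hgg]
      _ ≤ 4*(r*d) := habs
  have h6 : 6/100*N₂ ≤ A + (A+t) := by linarith
  have h7 : |t| * (6/100*N₂) ≤ 8*(N₂*d) := by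
    have h8 : |t| * (6/100*N₂) ≤ |t| * (A + (A+t)) :=
      mul_le_mul_of_nonneg_left h6 (abs_nonneg t)
    have h9 : r*d ≤ 2*N₂*d := mul_le_mul_of_nonneg_right hr2 hd0.le
    linarith only [h8, h9, hkey]
  have h10 : |t| * N₂ ≤ 134*d*N₂ := by linarith only [h7, mul_nonneg hN.le hd0.le]
  exact le_of_mul_le_mul_right h10 hN

lemma aux_meas (θ r d L : ℝ) (c : ℂ) :
    MeasurableSet {z : ℂ | |Complex.arg z - L| ≤ θ ∧ |‖z - c‖ - r| ≤ d ∧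
      9/10*r^2 ≤ (z * (starRingEnd ℂ) (z - c)).re} := by
  rw [show {z : ℂ | |Complex.arg z - L| ≤ θ ∧ |‖z - c‖ - r| ≤ d ∧
      9/10*r^2 ≤ (z * (starRingEnd ℂ) (z - c)).re}
    = {z : ℂ | |Complex.arg z - L| ≤ θ} ∩ ({z : ℂ | |‖z - c‖ - r| ≤ d} ∩
      {z : ℂ | 9/10*r^2 ≤ (z * (starRingEnd ℂ) (z - c)).re}) from rfl]
  refine MeasurableSet.inter ?_ (MeasurableSet.inter ?_ ?_)
  · exact measurableSet_le ((Complex.measurable_arg.sub measurable_const).abs) measurable_const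
  · have hcont : Continuous fun z : ℂ => |‖z - c‖ - r| :=
      ((continuous_id.sub continuous_const).norm.sub continuous_const).abs
    exact measurableSet_le hcont.measurable measurable_const
  · have hcont : Continuous fun z : ℂ => (z * (starRingEnd ℂ) (z - c)).re :=
      Complex.continuous_re.comp
        (continuous_id.mul (Complex.continuous_conj.comp (continuous_id.sub continuous_const)))
    exact measurableSet_le measurable_const hcont.measurable

lemma aux_core (θ N₂ r d L : ℝ) (c : ℂ)
    (hθ : 0 < θ) (hθ' : θ < 1/50) (hN : 0 < N₂) (hr1 : N₂/2 ≤ r) (hr2 : r ≤ 2*N₂)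
    (hc : ‖c‖ ≤ N₂) (hd0 : 0 < d) (hd : d ≤ N₂/100) :
    volume {z : ℂ | |Complex.arg z - L| ≤ θ ∧ |‖z - c‖ - r| ≤ d ∧
        9/10*r^2 ≤ (z * (starRingEnd ℂ) (z - c)).re}
      ≤ ENNReal.ofReal (2200 * (N₂*θ*d)) := by
  set A1 := {z : ℂ | |Complex.arg z - L| ≤ θ ∧ |‖z - c‖ - r| ≤ d ∧
      9/10*r^2 ≤ (z * (starRingEnd ℂ) (z - c)).re} with hA1def
  have hA1m : MeasurableSet A1 := aux_meas θ r d L c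
  set φ : ℝ := L + Real.pi/2 with hφ
  set R : ℂ ≃ₗᵢ[ℝ] ℂ := rotation (Circle.exp φ) with hRdef
  have hIu : Complex.exp (↑φ * I) = I * Complex.exp (↑L * I) := by
    rw [hφ, Complex.ofReal_add, add_mul, Complex.exp_add, mul_comm]
    congr 1
    rw [Complex.exp_mul_I, ← Complex.ofReal_cos, ← Complex.ofReal_sin,
      Real.cos_pi_div_two, Real.sin_pi_div_two]
    simp
  have hRapp : ∀ w : ℂ, R w = I * Complex.exp (↑L * I) * w := by
    intro w; rw [hRdef, rotation_apply, Circle.coe_exp, hIu]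
  set B := ⇑R ⁻¹' A1 with hBdef
  have hBm : MeasurableSet B := R.continuous.measurable hA1m
  set T := ⇑(Complex.measurableEquivRealProd.symm) ⁻¹' B with hTdef
  have hTm : MeasurableSet T := Complex.measurableEquivRealProd.symm.measurable hBm
  have hTmem : ∀ p : ℝ × ℝ, p ∈ T ↔ I * Complex.exp (↑L * I) * (⟨p.1, p.2⟩ : ℂ) ∈ A1 := by
    intro p
    rw [hTdef, Set.mem_preimage, Complex.measurableEquivRealProd_symm_apply, hBdef,
      Set.mem_preimage, hRapp]
  have hvol : volume A1 = volume T := by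
    have hq1 : volume T = volume B :=
      (Complex.volume_preserving_equiv_real_prod.symm).measure_preimage hBm.nullMeasurableSet
    have hq2 : volume B = volume A1 :=
      R.measurePreserving.measure_preimage hA1m.nullMeasurableSet
    rw [hq1, hq2]
  have hslice : ∀ x : ℝ, volume (Prod.mk x ⁻¹' T)
      ≤ (Set.Icc (-(4*N₂*θ)) (4*N₂*θ)).indicator (fun _ => ENNReal.ofReal (268*d)) x := by
    intro x
    by_cases hx : x ∈ Set.Icc (-(4*N₂*θ)) (4*N₂*θ)
    · rw [Set.indicator_of_mem hx]
      rcases Set.eq_empty_or_nonempty (Prod.mk x ⁻¹' T) with he | ⟨y₀, hy₀⟩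
      · rw [he]; simp
      · have hy₀' := (hTmem (x, y₀)).1 hy₀
        obtain ⟨hb1, hb2, hb3⟩ := hy₀'
        have hsub2 : Prod.mk x ⁻¹' T ⊆ Set.Icc (y₀ - 134*d) (y₀ + 134*d) := by
          intro y hy
          obtain ⟨ha1, ha2, ha3⟩ := (hTmem (x, y)).1 hy
          have hxy : (⟨x, y⟩ : ℂ) - (⟨x, y₀⟩ : ℂ) = ↑(y - y₀) * I := by
            apply Complex.ext <;> simp
          have hdiff : (I * Complex.exp (↑L * I) * (⟨x, y⟩ : ℂ))
              - (I * Complex.exp (↑L * I) * (⟨x, y₀⟩ : ℂ))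
              = ↑(y₀ - y) * Complex.exp (↑L * I) := by
            calc (I * Complex.exp (↑L * I) * (⟨x, y⟩ : ℂ))
                - (I * Complex.exp (↑L * I) * (⟨x, y₀⟩ : ℂ))
                = I * Complex.exp (↑L * I) * ((⟨x, y⟩ : ℂ) - (⟨x, y₀⟩ : ℂ)) := by ring
              _ = ↑(y - y₀) * (I*I) * Complex.exp (↑L * I) := by rw [hxy]; ring
              _ = ↑(y₀ - y) * Complex.exp (↑L * I) := by
                  rw [Complex.I_mul_I]; push_cast; ring
          have ht := aux_claimC θ N₂ r d L c _ _ hθ hθ' hN hr1 hr2 hc hd0 hd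
            hb1 hb2 hb3 ha1 ha2 ha3 (y₀ - y) hdiff
          have htt := abs_le.1 ht
          rw [Set.mem_Icc]
          constructor <;> linarith [htt.1, htt.2]
        calc volume (Prod.mk x ⁻¹' T) ≤ volume (Set.Icc (y₀ - 134*d) (y₀ + 134*d)) :=
              measure_mono hsub2
          _ = ENNReal.ofReal (y₀ + 134*d - (y₀ - 134*d)) := Real.volume_Icc
          _ ≤ ENNReal.ofReal (268*d) := by
              apply ENNReal.ofReal_le_ofReal; linarith
    · rw [Set.indicator_of_notMem hx]
      have hemp : Prod.mk x ⁻¹' T = ∅ := by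
        rw [Set.eq_empty_iff_forall_notMem]
        intro y hy
        obtain ⟨ha1, ha2, ha3⟩ := (hTmem (x, y)).1 hy
        have hB := aux_claimB θ N₂ r d L c _ hθ hθ' hN hr1 hr2 hc hd0 hd ha1 ha2
        have habs1 : ‖I * Complex.exp (↑L*I)‖ = 1 := by
          rw [norm_mul, Complex.norm_I, one_mul, Complex.norm_exp_ofReal_mul_I]
        have hIu1 : (starRingEnd ℂ) (I * Complex.exp (↑L*I)) * (I * Complex.exp (↑L*I)) = 1 := by
          rw [mul_comm, Complex.mul_conj, Complex.normSq_eq_norm_sq, habs1]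
          norm_num
        have hconj : (starRingEnd ℂ) (I * Complex.exp (↑L*I))
            * (I * Complex.exp (↑L*I) * (⟨x, y⟩:ℂ)) = (⟨x,y⟩:ℂ) := by
          rw [← mul_assoc, hIu1, one_mul]
        rw [hconj] at hB
        have hxb : |x| ≤ 4*N₂*θ := by simpa using hB
        have hxb' := abs_le.1 hxb
        exact hx (Set.mem_Icc.2 ⟨by linarith [hxb'.1], hxb'.2⟩)
      rw [hemp]; simp
  calc volume A1 = volume T := hvol
    _ = ∫⁻ x, volume (Prod.mk x ⁻¹' T) := by
        rw [Measure.volume_eq_prod ℝ ℝ, Measure.prod_apply hTm]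
    _ ≤ ∫⁻ x, (Set.Icc (-(4*N₂*θ)) (4*N₂*θ)).indicator (fun _ => ENNReal.ofReal (268*d)) x :=
        lintegral_mono hslice
    _ = ENNReal.ofReal (268*d) * volume (Set.Icc (-(4*N₂*θ)) (4*N₂*θ)) :=
        lintegral_indicator_const measurableSet_Icc _
    _ = ENNReal.ofReal (268*d) * ENNReal.ofReal (4*N₂*θ - -(4*N₂*θ)) := by rw [Real.volume_Icc]
    _ ≤ ENNReal.ofReal (2200 * (N₂*θ*d)) := by
        rw [← ENNReal.ofReal_mul (by positivity)]
        apply ENNReal.ofReal_le_ofReal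
        nlinarith [mul_nonneg (mul_nonneg hN.le hθ.le) hd0.le]

/-- measure of the arc-neighborhood cut by two angular sectors. -/
theorem stmt7 :
    ∃ C > 0, ∀ (θ N₂ r : ℝ) (ξ : ℂ),
      0 < θ → θ < 1 / 50 → 0 < N₂ →
      N₂ / 2 ≤ ‖ξ‖ → ‖ξ‖ ≤ 2 * N₂ →
      N₂ / 2 ≤ r → r ≤ 2 * N₂ →
      ∀ l₁ l₂ : ℤ, ∃ ε₀ > 0, ∀ ε : ℝ, 0 < ε → ε ≤ ε₀ →
        volume {ξ₁ : ℂ | |Complex.arg ξ₁ - l₁ * θ| ≤ θ ∧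
                         |Complex.arg (ξ - ξ₁) - l₂ * θ| ≤ θ ∧
                         |‖ξ₁ - ξ / 2‖ - r| ≤ ε / N₂}
          ≤ ENNReal.ofReal (C * θ * ε) := by
  refine ⟨10000, by norm_num, ?_⟩
  intro θ N₂ r ξ hθ hθ' hN hξ1 hξ2 hr1 hr2 l₁ l₂
  refine ⟨N₂^2/100, by positivity, ?_⟩
  intro ε hε hεle
  have hc : ‖ξ/2‖ ≤ N₂ := by
    rw [norm_div]
    have h2 : ‖(2:ℂ)‖ = 2 := by norm_num
    rw [h2]; linarith
  have hd0 : 0 < ε/N₂ := div_pos hε hN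
  have hd : ε/N₂ ≤ N₂/100 := by
    rw [div_le_iff₀ hN]; nlinarith
  set A1 := {z : ℂ | |Complex.arg z - ↑l₁*θ| ≤ θ ∧ |‖z - ξ/2‖ - r| ≤ ε/N₂ ∧
      9/10*r^2 ≤ (z * (starRingEnd ℂ) (z - ξ/2)).re} with hA1def
  set A2 := {z : ℂ | |Complex.arg z - ↑l₂*θ| ≤ θ ∧ |‖z - ξ/2‖ - r| ≤ ε/N₂ ∧
      9/10*r^2 ≤ (z * (starRingEnd ℂ) (z - ξ/2)).re} with hA2def
  have hsub : {ξ₁ : ℂ | |Complex.arg ξ₁ - l₁ * θ| ≤ θ ∧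
      |Complex.arg (ξ - ξ₁) - l₂ * θ| ≤ θ ∧ |‖ξ₁ - ξ / 2‖ - r| ≤ ε / N₂}
      ⊆ A1 ∪ (fun z => ξ - z) ⁻¹' A2 := by
    rintro z ⟨hz1, hz2, hz3⟩
    by_cases hcase : 9/10*r^2 ≤ (z * (starRingEnd ℂ) (z - ξ/2)).re
    · exact Or.inl ⟨hz1, hz3, hcase⟩
    · refine Or.inr ?_
      have hn : ‖(ξ - z) - ξ/2‖ = ‖z - ξ/2‖ := by
        rw [show (ξ - z) - ξ/2 = -(z - ξ/2) from by ring, norm_neg]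
      refine ⟨hz2, by rw [hn]; exact hz3, ?_⟩
      have e : z * (starRingEnd ℂ) (z - ξ/2) + (ξ - z) * (starRingEnd ℂ) ((ξ - z) - ξ/2)
          = (z - ξ/2) * (starRingEnd ℂ) (z - ξ/2) + (z - ξ/2) * (starRingEnd ℂ) (z - ξ/2) := by
        rw [show (ξ - z) - ξ/2 = -(z - ξ/2) from by ring, map_neg]; ring
      have e2 : ((z - ξ/2) * (starRingEnd ℂ) (z - ξ/2)).re = ‖z - ξ/2‖^2 := by
        rw [Complex.mul_conj, Complex.ofReal_re, Complex.normSq_eq_norm_sq]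
      have hkey : (z * (starRingEnd ℂ) (z - ξ/2)).re
          + ((ξ - z) * (starRingEnd ℂ) ((ξ - z) - ξ/2)).re = 2*‖z - ξ/2‖^2 := by
        have := congrArg Complex.re e
        rw [Complex.add_re, Complex.add_re, e2] at this
        linarith [this]
      have hnorm : r - ε/N₂ ≤ ‖z - ξ/2‖ := by linarith [(abs_le.1 hz3).1]
      have hge0 : 0 ≤ r - ε/N₂ := by linarith
      have hw50 : ε/N₂ ≤ r/50 := by linarith
      have hcase' := not_le.1 hcase
      show 9/10*r^2 ≤ ((ξ - z) * (starRingEnd ℂ) ((ξ - z) - ξ/2)).re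
      nlinarith [hkey, hnorm, hge0, sq_nonneg (‖z - ξ/2‖ - (r - ε/N₂)),
        mul_le_mul_of_nonneg_left hw50 (show (0:ℝ) ≤ r by linarith)]
  have hcore1 := aux_core θ N₂ r (ε/N₂) (↑l₁*θ) (ξ/2) hθ hθ' hN hr1 hr2 hc hd0 hd
  have hcore2 := aux_core θ N₂ r (ε/N₂) (↑l₂*θ) (ξ/2) hθ hθ' hN hr1 hr2 hc hd0 hd
  calc volume {ξ₁ : ℂ | |Complex.arg ξ₁ - l₁ * θ| ≤ θ ∧
      |Complex.arg (ξ - ξ₁) - l₂ * θ| ≤ θ ∧ |‖ξ₁ - ξ / 2‖ - r| ≤ ε / N₂}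
      ≤ volume (A1 ∪ (fun z => ξ - z) ⁻¹' A2) := measure_mono hsub
    _ ≤ volume A1 + volume ((fun z => ξ - z) ⁻¹' A2) := measure_union_le _ _
    _ = volume A1 + volume A2 := by
        rw [(Measure.measurePreserving_sub_left volume ξ).measure_preimage
          (aux_meas θ r (ε/N₂) (↑l₂*θ) (ξ/2)).nullMeasurableSet]
    _ ≤ ENNReal.ofReal (2200 * (N₂*θ*(ε/N₂))) + ENNReal.ofReal (2200 * (N₂*θ*(ε/N₂))) :=
        add_le_add hcore1 hcore2
    _ ≤ ENNReal.ofReal (10000 * θ * ε) := by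
        rw [← ENNReal.ofReal_add (by positivity) (by positivity)]
        apply ENNReal.ofReal_le_ofReal
        have he : N₂*θ*(ε/N₂) = θ*ε := by field_simp
        rw [he]
        nlinarith [mul_nonneg hθ.le hε.le]
end

section
/- Let ξ₁, ξ₂, ξ₃, ξ₄ ∈ ℝ² ∖ {0} with ξ₁+ξ₂+ξ₃+ξ₄ = 0, |ξ₁| ∼ N₁, |ξ₃| ∼ N₃, |ξ₄| ∼ N₄ with N₄ ≪ N₃ ≲ N₁. Then ∠(ξ₁, ξ₁+ξ₄) = O(N₄/N₁) and ∠(ξ₃, ξ₃+ξ₄) = O(N₄/N₃), and consequently |cos∠(ξ₁, ξ₃)| ≤ |cos∠(ξ₁+ξ₄, ξ₁+ξ₂)| + C·N₄/N₃. -/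
open InnerProductGeometry Real

variable {E : Type*} [NormedAddCommGroup E] [InnerProductSpace ℝ E]

local notation "⟪" x ", " y "⟫" => @inner ℝ _ _ x y

lemma norm_normalize_sub (u u' : E) (hu : u ≠ 0) (hu' : u' ≠ 0) :
    ‖(‖u‖⁻¹ • u) - (‖u'‖⁻¹ • u')‖ ≤ 2 * ‖u - u'‖ / ‖u‖ := by
  have h1 : (0:ℝ) < ‖u‖ := norm_pos_iff.mpr hu
  have h2 : (0:ℝ) < ‖u'‖ := norm_pos_iff.mpr hu'
  have key : (‖u‖⁻¹ • u) - (‖u'‖⁻¹ • u') = ‖u‖⁻¹ • (u - u') + (‖u‖⁻¹ - ‖u'‖⁻¹) • u' := by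
    rw [smul_sub, sub_smul]; abel
  rw [key]
  have e1 : ‖(‖u‖⁻¹ : ℝ) • (u - u')‖ = ‖u - u'‖ / ‖u‖ := by
    rw [norm_smul, Real.norm_eq_abs, abs_of_pos (inv_pos.mpr h1)]
    rw [inv_mul_eq_div]
  have e2 : ‖(‖u‖⁻¹ - ‖u'‖⁻¹ : ℝ) • u'‖ ≤ ‖u - u'‖ / ‖u‖ := by
    rw [norm_smul, Real.norm_eq_abs]
    have e3 : (‖u‖⁻¹ - ‖u'‖⁻¹ : ℝ) = (‖u'‖ - ‖u‖) / (‖u‖ * ‖u'‖) := by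
      field_simp
    rw [e3, abs_div, abs_of_pos (mul_pos h1 h2)]
    have h4 : |‖u'‖ - ‖u‖| ≤ ‖u - u'‖ := by
      rw [norm_sub_rev]; exact abs_norm_sub_norm_le u' u
    rw [div_mul_eq_mul_div, div_le_div_iff₀ (mul_pos h1 h2) h1]
    calc |‖u'‖ - ‖u‖| * ‖u'‖ * ‖u‖ ≤ ‖u - u'‖ * ‖u'‖ * ‖u‖ := by
          gcongr
      _ = ‖u - u'‖ * (‖u‖ * ‖u'‖) := by ring
  calc ‖(‖u‖⁻¹ : ℝ) • (u - u') + (‖u‖⁻¹ - ‖u'‖⁻¹ : ℝ) • u'‖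
      ≤ ‖(‖u‖⁻¹ : ℝ) • (u - u')‖ + ‖(‖u‖⁻¹ - ‖u'‖⁻¹ : ℝ) • u'‖ := norm_add_le _ _
    _ ≤ ‖u - u'‖ / ‖u‖ + ‖u - u'‖ / ‖u‖ := by rw [e1]; gcongr
    _ = 2 * ‖u - u'‖ / ‖u‖ := by ring

lemma cos_angle_sub_cos_angle_left (u u' w : E) (hu : u ≠ 0) (hu' : u' ≠ 0) (hw : w ≠ 0) :
    |Real.cos (angle u w) - Real.cos (angle u' w)| ≤ 2 * ‖u - u'‖ / ‖u‖ := by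
  have h1 : (0:ℝ) < ‖u‖ := norm_pos_iff.mpr hu
  have h2 : (0:ℝ) < ‖u'‖ := norm_pos_iff.mpr hu'
  have h3 : (0:ℝ) < ‖w‖ := norm_pos_iff.mpr hw
  have e1 : Real.cos (angle u w) = ⟪‖u‖⁻¹ • u, ‖w‖⁻¹ • w⟫ := by
    rw [cos_angle, real_inner_smul_left, real_inner_smul_right]
    field_simp
  have e2 : Real.cos (angle u' w) = ⟪‖u'‖⁻¹ • u', ‖w‖⁻¹ • w⟫ := by
    rw [cos_angle, real_inner_smul_left, real_inner_smul_right]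
    field_simp
  rw [e1, e2, ← inner_sub_left]
  calc |⟪(‖u‖⁻¹ • u) - (‖u'‖⁻¹ • u'), ‖w‖⁻¹ • w⟫|
      ≤ ‖(‖u‖⁻¹ • u) - (‖u'‖⁻¹ • u')‖ * ‖(‖w‖⁻¹ : ℝ) • w‖ := abs_real_inner_le_norm _ _
    _ = ‖(‖u‖⁻¹ • u) - (‖u'‖⁻¹ • u')‖ := by
          have : ‖(‖w‖⁻¹ : ℝ) • w‖ = 1 := by
            rw [norm_smul, Real.norm_eq_abs, abs_of_pos (inv_pos.mpr h3),
              inv_mul_cancel₀ h3.ne']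
          rw [this, mul_one]
    _ ≤ 2 * ‖u - u'‖ / ‖u‖ := norm_normalize_sub u u' hu hu'

lemma angle_perturb (u v : E) (hu : u ≠ 0) (huv : u + v ≠ 0) :
    angle u (u + v) ≤ 2 * π * (‖v‖ / ‖u‖) := by
  have h1 : (0:ℝ) < ‖u‖ := norm_pos_iff.mpr hu
  by_cases hcase : ‖u‖ ≤ 2 * ‖v‖
  · have hhalf : (1:ℝ)/2 ≤ ‖v‖ / ‖u‖ := by
      rw [le_div_iff₀ h1]; linarith
    have := angle_le_pi u (u + v)
    nlinarith [Real.pi_pos]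
  · push_neg at hcase
    set w := u + v with hw
    have hwn : (0:ℝ) < ‖w‖ := norm_pos_iff.mpr huv
    have hvu : ‖v‖ < ‖u‖ := by linarith [norm_nonneg v]
    have hiuw : ⟪u, w⟫ = ‖u‖^2 + ⟪u, v⟫ := by
      rw [hw, inner_add_right, real_inner_self_eq_norm_sq]
    have hcs : |⟪u, v⟫| ≤ ‖u‖ * ‖v‖ := abs_real_inner_le_norm u v
    have hinner_pos : 0 ≤ ⟪u, w⟫ := by
      rw [hiuw]
      nlinarith [abs_le.mp hcs]
    -- angle ≤ π/2
    have hle : angle u w ≤ π / 2 := by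
      rw [angle, Real.arccos_le_pi_div_two]
      positivity
    -- ‖w‖ ≥ ‖u‖/2
    have hwlow : ‖u‖ / 2 ≤ ‖w‖ := by
      have : ‖u‖ ≤ ‖w‖ + ‖v‖ := by
        calc ‖u‖ = ‖w - v‖ := by rw [hw]; congr 1; abel
          _ ≤ ‖w‖ + ‖v‖ := norm_sub_le _ _
      linarith
    -- sin bound
    have hsin := sin_angle_mul_norm_mul_norm u w
    have hexp : ⟪u, u⟫ * ⟪w, w⟫ - ⟪u, w⟫ * ⟪u, w⟫ ≤ (‖u‖ * ‖v‖)^2 := by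
      have h5 : ⟪u, u⟫ = ‖u‖^2 := real_inner_self_eq_norm_sq u
      have h6 : ⟪w, w⟫ = ‖u‖^2 + 2*⟪u,v⟫ + ‖v‖^2 := by
        rw [hw, real_inner_self_eq_norm_sq, norm_add_sq_real]
      rw [h5, h6, hiuw]
      nlinarith [sq_nonneg ⟪u,v⟫]
    have hsin2 : Real.sin (angle u w) * (‖u‖ * ‖w‖) ≤ ‖u‖ * ‖v‖ := by
      rw [hsin]
      calc √(⟪u, u⟫ * ⟪w, w⟫ - ⟪u, w⟫ * ⟪u, w⟫) ≤ √((‖u‖ * ‖v‖)^2) :=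
            Real.sqrt_le_sqrt hexp
        _ = ‖u‖ * ‖v‖ := Real.sqrt_sq (by positivity)
    have hsin3 : Real.sin (angle u w) ≤ 2 * ‖v‖ / ‖u‖ := by
      have step1 : Real.sin (angle u w) ≤ ‖v‖ / ‖w‖ := by
        rw [le_div_iff₀ hwn]
        nlinarith
      have step2 : ‖v‖ / ‖w‖ ≤ 2 * ‖v‖ / ‖u‖ := by
        rw [div_le_div_iff₀ hwn h1]
        nlinarith [norm_nonneg v]
      linarith
    have hms := Real.mul_le_sin (angle_nonneg u w) hle
    have hpi : (0:ℝ) < π := Real.pi_pos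
    have hd : (0:ℝ) ≤ ‖v‖ / ‖u‖ := by positivity
    have hθ : angle u w ≤ π / 2 * Real.sin (angle u w) := by
      have h7 : angle u w = π / 2 * (2 / π * angle u w) := by
        field_simp
      have h9 := mul_le_mul_of_nonneg_left hms (by positivity : (0:ℝ) ≤ π / 2)
      linarith [h7.le, h9]
    have h8 : 2 * ‖v‖ / ‖u‖ = 2 * (‖v‖ / ‖u‖) := by ring
    rw [h8] at hsin3
    calc angle u w ≤ π / 2 * Real.sin (angle u w) := hθ
      _ ≤ π / 2 * (2 * (‖v‖ / ‖u‖)) := by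
          have := mul_le_mul_of_nonneg_left hsin3 (by positivity : (0:ℝ) ≤ π / 2)
          linarith
      _ = π * (‖v‖ / ‖u‖) := by ring
      _ ≤ 2 * π * (‖v‖ / ‖u‖) := by nlinarith [hpi, hd]

/-- replacing the resonance constraint by a simpler angular constraint. -/
theorem stmt9 :
    ∃ C > 0, ∀ (N₁ N₃ N₄ : ℝ) (ξ₁ ξ₂ ξ₃ ξ₄ : EuclideanSpace ℝ (Fin 2)),
      0 < N₁ → 0 < N₃ → 0 < N₄ →
      ξ₁ ≠ 0 → ξ₂ ≠ 0 → ξ₃ ≠ 0 → ξ₄ ≠ 0 →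
      ξ₁ + ξ₂ + ξ₃ + ξ₄ = 0 →
      N₁ / 2 ≤ ‖ξ₁‖ → ‖ξ₁‖ ≤ 2 * N₁ →
      N₃ / 2 ≤ ‖ξ₃‖ → ‖ξ₃‖ ≤ 2 * N₃ →
      N₄ / 2 ≤ ‖ξ₄‖ → ‖ξ₄‖ ≤ 2 * N₄ →
      100 * N₄ ≤ N₃ → N₃ ≤ 100 * N₁ →
      ξ₁ + ξ₄ ≠ 0 → ξ₃ + ξ₄ ≠ 0 → ξ₁ + ξ₂ ≠ 0 →
      angle ξ₁ (ξ₁ + ξ₄) ≤ C * (N₄ / N₁) ∧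
      angle ξ₃ (ξ₃ + ξ₄) ≤ C * (N₄ / N₃) ∧
      |Real.cos (angle ξ₁ ξ₃)|
        ≤ |Real.cos (angle (ξ₁ + ξ₄) (ξ₁ + ξ₂))| + C * (N₄ / N₃) := by
  refine ⟨1000, by norm_num, ?_⟩
  intro N₁ N₃ N₄ ξ₁ ξ₂ ξ₃ ξ₄ hN₁ hN₃ hN₄ h1 h2 h3 h4 hsum h1l h1u h3l h3u h4l h4u
    h43 h31 h14 h34 h12
  have hn1 : (0:ℝ) < ‖ξ₁‖ := norm_pos_iff.mpr h1
  have hn3 : (0:ℝ) < ‖ξ₃‖ := norm_pos_iff.mpr h3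
  have hy1 : (0:ℝ) ≤ N₄ / N₁ := by positivity
  have hy3 : (0:ℝ) ≤ N₄ / N₃ := by positivity
  have hr1 : ‖ξ₄‖ / ‖ξ₁‖ ≤ 4 * (N₄ / N₁) := by
    rw [div_le_iff₀ hn1]
    have : 4 * (N₄ / N₁) * ‖ξ₁‖ = 4 * ‖ξ₁‖ / N₁ * N₄ := by ring
    rw [this]
    have h5 : (2:ℝ) ≤ 4 * ‖ξ₁‖ / N₁ := by
      rw [le_div_iff₀ hN₁]; linarith
    have := mul_le_mul_of_nonneg_right h5 hN₄.le
    linarith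
  have hr3 : ‖ξ₄‖ / ‖ξ₃‖ ≤ 4 * (N₄ / N₃) := by
    rw [div_le_iff₀ hn3]
    have : 4 * (N₄ / N₃) * ‖ξ₃‖ = 4 * ‖ξ₃‖ / N₃ * N₄ := by ring
    rw [this]
    have h5 : (2:ℝ) ≤ 4 * ‖ξ₃‖ / N₃ := by
      rw [le_div_iff₀ hN₃]; linarith
    have := mul_le_mul_of_nonneg_right h5 hN₄.le
    linarith
  have key1 := angle_perturb ξ₁ ξ₄ h1 h14
  have key3 := angle_perturb ξ₃ ξ₄ h3 h34
  refine ⟨?_, ?_, ?_⟩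
  · calc angle ξ₁ (ξ₁ + ξ₄) ≤ 2 * π * (‖ξ₄‖ / ‖ξ₁‖) := key1
      _ ≤ 1000 * (N₄ / N₁) := by
          nlinarith [Real.pi_le_four, Real.pi_pos, hr1, hy1,
            div_nonneg (norm_nonneg ξ₄) hn1.le]
  · calc angle ξ₃ (ξ₃ + ξ₄) ≤ 2 * π * (‖ξ₄‖ / ‖ξ₃‖) := key3
      _ ≤ 1000 * (N₄ / N₃) := by
          nlinarith [Real.pi_le_four, Real.pi_pos, hr3, hy3,
            div_nonneg (norm_nonneg ξ₄) hn3.le]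
  · have h12eq : ξ₁ + ξ₂ = -(ξ₃ + ξ₄) := by
      apply eq_neg_of_add_eq_zero_left
      rw [← add_assoc]; exact hsum
    have hcosB : |Real.cos (angle (ξ₁ + ξ₄) (ξ₁ + ξ₂))|
        = |Real.cos (angle (ξ₁ + ξ₄) (ξ₃ + ξ₄))| := by
      rw [h12eq, angle_neg_right, Real.cos_pi_sub, abs_neg]
    have d1 := cos_angle_sub_cos_angle_left ξ₁ (ξ₁ + ξ₄) ξ₃ h1 h14 h3
    have e1 : ξ₁ - (ξ₁ + ξ₄) = -ξ₄ := by abel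
    rw [e1, norm_neg] at d1
    have d2 := cos_angle_sub_cos_angle_left ξ₃ (ξ₃ + ξ₄) (ξ₁ + ξ₄) h3 h34 h14
    have e2 : ξ₃ - (ξ₃ + ξ₄) = -ξ₄ := by abel
    rw [e2, norm_neg, angle_comm ξ₃ (ξ₁ + ξ₄), angle_comm (ξ₃ + ξ₄) (ξ₁ + ξ₄)] at d2
    set a := Real.cos (angle ξ₁ ξ₃)
    set b := Real.cos (angle (ξ₁ + ξ₄) ξ₃)
    set c := Real.cos (angle (ξ₁ + ξ₄) (ξ₃ + ξ₄))
    have tri : |a| ≤ |c| + |a - b| + |b - c| := by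
      have : a = c + (a - b) + (b - c) := by ring
      calc |a| = |c + (a - b) + (b - c)| := by rw [← this]
        _ ≤ |c + (a - b)| + |b - c| := abs_add_le _ _
        _ ≤ |c| + |a - b| + |b - c| := by linarith [abs_add_le c (a - b)]
    have hq : N₄ / N₁ ≤ 100 * (N₄ / N₃) := by
      rw [div_le_iff₀ hN₁]
      have : 100 * (N₄ / N₃) * N₁ = 100 * N₁ / N₃ * N₄ := by ring
      rw [this]
      have h5 : (1:ℝ) ≤ 100 * N₁ / N₃ := by
        rw [le_div_iff₀ hN₃]; linarith
      have := mul_le_mul_of_nonneg_right h5 hN₄.le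
      linarith
    have h8a : 2 * ‖ξ₄‖ / ‖ξ₁‖ = 2 * (‖ξ₄‖ / ‖ξ₁‖) := by ring
    have h8b : 2 * ‖ξ₄‖ / ‖ξ₃‖ = 2 * (‖ξ₄‖ / ‖ξ₃‖) := by ring
    rw [hcosB]
    rw [h8a] at d1
    rw [h8b] at d2
    linarith [tri, d1, d2, hr1, hr3, hq, hy3]
end
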